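/- With [s]_{x,α} = 1 - α x^s, N_{s,t} = ([3]_{x,α}[s+2]_{x,α}[t+2]_{x,α}[s+t+3]_{x,α})/([2]_{x,α}[s+3]_{x,α}[t+3]_{x,α}[s+t+2]_{x,α}), and g D_{s,t} = α x (1-x)(1-x^s)(1-x^t)[s+t+3]_{x,α²}/([2]_{x,α}[s+1]_{x,α}[t+1]_{x,α}[s+t+2]_{x,α}), and with U_s, g as in the bivariate parametrization (U_s = U [s]_{x,1}[s+3]_{x,α}/([s+1]_{x,1}[s+2]_{x,α}), U = (1+x+αx-6αx²+αx³+α²x³+α²x⁴)/((1-αx)(1-αx³)), g = x(1-αx)³(1-αx³)/(1+x+αx-6αx²+αx³+α²x³+α²x⁴)²), the identity N_{s,t} = 1 + g² U_s U_t N_{s,t} · (D_{s+1,t+1}/(1 - g D_{s+1,t+1})) holds as an identity of rational functions in x and α, for all natural numbers s, t. -/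

import Mathlib

noncomputable section

/-- The field of rational functions ℚ(x,α) in two variables. -/
abbrev K := FractionRing (MvPolynomial (Fin 2) ℚ)

/-- The formal variable x. -/
def x : K := algebraMap (MvPolynomial (Fin 2) ℚ) K (MvPolynomial.X 0)

/-- The formal variable α. -/
def a : K := algebraMap (MvPolynomial (Fin 2) ℚ) K (MvPolynomial.X 1)

/-- [s]_{x,α} = 1 - α x^s. -/
def brA (s : ℕ) : K := 1 - a * x ^ s

/-- [s]_{x,α²} = 1 - α² x^s. -/
def brA2 (s : ℕ) : K := 1 - a ^ 2 * x ^ s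

/-- [s]_{x,1} = 1 - x^s. -/
def br1 (s : ℕ) : K := 1 - x ^ s

/-- The recurring polynomial 1+x+αx-6αx²+αx³+α²x³+α²x⁴. -/
def P : K := 1 + x + a * x - 6 * a * x ^ 2 + a * x ^ 3 + a ^ 2 * x ^ 3 + a ^ 2 * x ^ 4

/-- T (bivariate). -/
def T : K := a * (1 - x) ^ 2 * P / ((1 - a * x) ^ 3 * (1 - a * x ^ 3))

/-- U (bivariate). -/
def U : K := P / ((1 - a * x) * (1 - a * x ^ 3))

/-- g (bivariate). -/
def g : K := x * (1 - a * x) ^ 3 * (1 - a * x ^ 3) / P ^ 2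

/-- z (bivariate). -/
def z : K := a * (1 - x) ^ 3 * (1 - a ^ 2 * x ^ 3) / ((1 - a * x) ^ 3 * (1 - a * x ^ 3))

/-- T_s (bivariate). -/
def Ts (s : ℕ) : K := T * br1 s * brA2 (s + 3) / (brA (s + 1) * brA (s + 2))

/-- U_s (bivariate). -/
def Us (s : ℕ) : K := U * br1 s * brA (s + 3) / (br1 (s + 1) * brA (s + 2))

/-- W_s = U_s / (1 + g U_s T_{s+1}). -/
def W (s : ℕ) : K := Us s / (1 + g * Us s * Ts (s + 1))

/-- N_{s,t} (bivariate). -/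
def N (s t : ℕ) : K :=
  brA 3 * brA (s + 2) * brA (t + 2) * brA (s + t + 3) /
    (brA 2 * brA (s + 3) * brA (t + 3) * brA (s + t + 2))

/-- g·D_{s,t}, via its closed form. -/
def gD (s t : ℕ) : K :=
  a * x * (1 - x) * (1 - x ^ s) * (1 - x ^ t) * brA2 (s + t + 3) /
    (brA 2 * brA (s + 1) * brA (t + 1) * brA (s + t + 2))

/-- D_{s,t} recovered from g·D_{s,t}. -/
def D (s t : ℕ) : K := gD s t / g

/-! Since `g U² = x [1]_{x,α} / [3]_{x,α}`, clearing denominators turns the recursion into the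
statement that (numerator − denominator of `N_{s,t}`) times the numerator of `1 − gD_{s+1,t+1}`
factors as `α x² (1 − x) [1]_{x,α} [s]_{x,1} [t]_{x,1} [s+3]_{x,α} [t+3]_{x,α} [s+t+3]_{x,α}
[s+t+5]_{x,α²}`, a polynomial identity in `x`, `α`, `x^s`, `x^t`. The denominators are nonzero in
`ℚ(x,α)`: each is `x` or comes from a polynomial with nonzero value at `x = α = 0`. -/

theorem cleared_recursion_identity {R : Type*} [CommRing R] (x a : R) (s t : ℕ) :
    ((1 - a * x ^ 3) * (1 - a * x ^ (s + 2)) * (1 - a * x ^ (t + 2)) * (1 - a * x ^ (s + t + 3)) -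
        (1 - a * x ^ 2) * (1 - a * x ^ (s + 3)) * (1 - a * x ^ (t + 3)) * (1 - a * x ^ (s + t + 2))) *
      ((1 - a * x ^ 2) * (1 - a * x ^ (s + 2)) * (1 - a * x ^ (t + 2)) * (1 - a * x ^ (s + t + 4)) -
        a * x * (1 - x) * (1 - x ^ (s + 1)) * (1 - x ^ (t + 1)) * (1 - a ^ 2 * x ^ (s + t + 5))) =
      a * x ^ 2 * (1 - x) * (1 - a * x) * (1 - x ^ s) * (1 - x ^ t) * (1 - a * x ^ (s + 3)) *
        (1 - a * x ^ (t + 3)) * (1 - a * x ^ (s + t + 3)) * (1 - a ^ 2 * x ^ (s + t + 5)) := by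
  ring

theorem algebraMap_ne_zero_of_eval_ne_zero {σ R L : Type*} [CommRing R] [CommRing L]
    [Algebra (MvPolynomial σ R) L] [IsFractionRing (MvPolynomial σ R) L]
    {p : MvPolynomial σ R} (v : σ → R) (h : MvPolynomial.eval v p ≠ 0) :
    algebraMap (MvPolynomial σ R) L p ≠ 0 :=
  (map_ne_zero_iff _ (IsFractionRing.injective _ L)).2 fun hp => h (by rw [hp, map_zero])

section Nonvanishing

open MvPolynomial

local notation "ι" => algebraMap (MvPolynomial (Fin 2) ℚ) K

theorem x_ne_zero : x ≠ 0 :=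
  algebraMap_ne_zero_of_eval_ne_zero (fun _ => 1) (by simp)

theorem brA_ne_zero (s : ℕ) : brA s ≠ 0 := by
  have h : brA s = ι (1 - X 1 * X 0 ^ s) := by simp [brA, a, x]
  exact h ▸ algebraMap_ne_zero_of_eval_ne_zero 0 (by simp)

theorem br1_succ_ne_zero (s : ℕ) : br1 (s + 1) ≠ 0 := by
  have h : br1 (s + 1) = ι (1 - X 0 ^ (s + 1)) := by simp [br1, x]
  exact h ▸ algebraMap_ne_zero_of_eval_ne_zero 0 (by simp)

theorem P_ne_zero : P ≠ 0 := by
  have h : P = ι (1 + X 0 + X 1 * X 0 - 6 * X 1 * X 0 ^ 2 + X 1 * X 0 ^ 3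
      + X 1 ^ 2 * X 0 ^ 3 + X 1 ^ 2 * X 0 ^ 4) := by
    simp [P, a, x, map_ofNat]
  exact h ▸ algebraMap_ne_zero_of_eval_ne_zero 0 (by simp)

theorem one_sub_gD_ne_zero (s t : ℕ) : 1 - gD s t ≠ 0 := by
  have hden : brA 2 * brA (s + 1) * brA (t + 1) * brA (s + t + 2) ≠ 0 := by
    simp [brA_ne_zero]
  have h : (1 - gD s t) * (brA 2 * brA (s + 1) * brA (t + 1) * brA (s + t + 2)) =
      ι ((1 - X 1 * X 0 ^ 2) * (1 - X 1 * X 0 ^ (s + 1)) * (1 - X 1 * X 0 ^ (t + 1))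
        * (1 - X 1 * X 0 ^ (s + t + 2)) - X 1 * X 0 * (1 - X 0) * (1 - X 0 ^ s) * (1 - X 0 ^ t)
        * (1 - X 1 ^ 2 * X 0 ^ (s + t + 3))) := by
    rw [sub_mul, one_mul, gD, div_mul_cancel₀ _ hden]
    simp [brA, brA2, a, x]
  exact left_ne_zero_of_mul (h ▸ algebraMap_ne_zero_of_eval_ne_zero 0 (by simp))

end Nonvanishing

theorem one_sub_a_mul_x_ne_zero : (1 : K) - a * x ≠ 0 := by
  simpa [brA] using brA_ne_zero 1

theorem g_ne_zero : g ≠ 0 :=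
  div_ne_zero (mul_ne_zero (mul_ne_zero x_ne_zero (pow_ne_zero 3 one_sub_a_mul_x_ne_zero))
    (brA_ne_zero 3)) (pow_ne_zero 2 P_ne_zero)

theorem g_mul_U_sq : g * U ^ 2 = x * brA 1 / brA 3 := by
  have h3 : (1 : K) - a * x ^ 3 ≠ 0 := brA_ne_zero 3
  simp only [g, U, brA, pow_one]
  field_simp [P_ne_zero, one_sub_a_mul_x_ne_zero]

theorem g_mul_Us_mul_Us (s t : ℕ) : g * Us s * Us t =
    x * brA 1 * br1 s * br1 t * brA (s + 3) * brA (t + 3) /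
      (brA 3 * br1 (s + 1) * br1 (t + 1) * brA (s + 2) * brA (t + 2)) :=
  calc g * Us s * Us t = g * U ^ 2 * (br1 s * br1 t * brA (s + 3) * brA (t + 3) /
      (br1 (s + 1) * br1 (t + 1) * brA (s + 2) * brA (t + 2))) := by
        simp only [Us, div_eq_mul_inv, mul_inv]
        ring
    _ = _ := by
        rw [g_mul_U_sq]
        ring

theorem gD_succ_succ (s t : ℕ) : gD (s + 1) (t + 1) =
    a * x * br1 1 * br1 (s + 1) * br1 (t + 1) * brA2 (s + t + 5) /
      (brA 2 * brA (s + 2) * brA (t + 2) * brA (s + t + 4)) := by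
  simp only [gD, br1, pow_one]
  ring_nf

theorem N_sub_one_mul_one_sub_gD (s t : ℕ) :
    (N s t - 1) * (1 - gD (s + 1) (t + 1)) = g * Us s * Us t * N s t * gD (s + 1) (t + 1) := by
  have cleared : (brA 3 * brA (s + 2) * brA (t + 2) * brA (s + t + 3) -
        brA 2 * brA (s + 3) * brA (t + 3) * brA (s + t + 2)) *
      (brA 2 * brA (s + 2) * brA (t + 2) * brA (s + t + 4) -
        a * x * br1 1 * br1 (s + 1) * br1 (t + 1) * brA2 (s + t + 5)) =
      a * x ^ 2 * br1 1 * brA 1 * br1 s * br1 t * brA (s + 3) * brA (t + 3) * brA (s + t + 3) *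
        brA2 (s + t + 5) := by
    simp only [brA, brA2, br1, pow_one]
    exact cleared_recursion_identity x a s t
  rw [g_mul_Us_mul_Us, N, gD_succ_succ, div_sub_one (by simp [brA_ne_zero]),
    one_sub_div (by simp [brA_ne_zero]), div_mul_div_comm, cleared, div_mul_div_comm,
    div_mul_div_comm, div_eq_div_iff (by simp [brA_ne_zero])
    (by simp [brA_ne_zero, br1_succ_ne_zero])]
  ring

theorem N_bivariate_recursion (s t : ℕ) :
    N s t = 1 + g ^ 2 * Us s * Us t * N s t *
      (D (s + 1) (t + 1) / (1 - g * D (s + 1) (t + 1))) := by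
  have hD := one_sub_gD_ne_zero (s + 1) (t + 1)
  rw [D, mul_div_cancel₀ _ g_ne_zero]
  field_simp [g_ne_zero]
  linear_combination N_sub_one_mul_one_sub_gD s t
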